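/- arXiv:1602.05266 — 8 statements merged into one kernel-verified Lean document; each statement's English description precedes it below -/
import Mathlib

section
/- For every natural number n ≥ 1, any common complex root of f_n and its derivative f_n' must lie in the set {0, 1}. -/
/-!
If `z ∉ {0, 1}` is a root of multiplicity `m ≥ 2` of `f = f_n`, then `(X - z)^(m-1)` divides
`n² f - (1 + (2n-1)X) f' = X(1 - X) f''`, hence divides `f''` because `z(1 - z) ≠ 0`. But in
characteristic zero `f''` has multiplicity exactly `m - 2` at `z`, which is impossible unless
`f = 0`, whereas `f_n(0) = 1`.
-/

open Polynomial

/-- The polynomial `f_n(z) = ∑_{j=0}^n (binom(n,j))^2 z^j` with complex coefficients. -/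
noncomputable def hyperPoly (n : ℕ) : Polynomial ℂ :=
  ∑ j ∈ Finset.range (n + 1), Polynomial.C ((n.choose j : ℂ) ^ 2) * Polynomial.X ^ j

namespace Polynomial

variable {K : Type*} [Field K] [CharZero K]

theorem derivative_ne_zero_of_isRoot {p : K[X]} {t : K} (hp : p ≠ 0) (ht : p.IsRoot t) :
    derivative p ≠ 0 :=
  derivative_ne_zero.2 (natDegree_pos_iff_degree_pos.2 (degree_pos_of_root hp ht)).ne'

theorem eq_zero_of_isRoot_of_isRoot_derivative_of_ode {a b c p : K[X]} {t : K}
    (hode : a * derivative (derivative p) + b * derivative p = c * p) (ha : ¬a.IsRoot t)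
    (hp : p.IsRoot t) (hp' : (derivative p).IsRoot t) : p = 0 := by
  by_contra hp0
  set m := p.rootMultiplicity t
  have hm : 1 < m := (one_lt_rootMultiplicity_iff_isRoot hp0).2 ⟨hp, hp'⟩
  have hdvd_p : (X - C t) ^ (m - 1) ∣ p :=
    (pow_dvd_pow _ (m.sub_le 1)).trans (pow_rootMultiplicity_dvd p t)
  have hdvd_p' : (X - C t) ^ (m - 1) ∣ derivative p :=
    derivative_rootMultiplicity_of_root hp ▸ pow_rootMultiplicity_dvd _ t
  have hdvd : (X - C t) ^ (m - 1) ∣ a * derivative (derivative p) := by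
    rw [eq_sub_of_add_eq hode]
    exact dvd_sub (hdvd_p.mul_left c) (hdvd_p'.mul_left b)
  have hcop : IsCoprime ((X - C t) ^ (m - 1)) a :=
    ((irreducible_X_sub_C t).coprime_iff_not_dvd.2 (by rwa [dvd_iff_isRoot])).pow_left
  have hle := (le_rootMultiplicity_iff (derivative_ne_zero_of_isRoot
    (derivative_ne_zero_of_isRoot hp0 hp) hp')).2 (hcop.dvd_of_dvd_mul_left hdvd)
  rw [derivative_rootMultiplicity_of_root hp', derivative_rootMultiplicity_of_root hp] at hle
  omega

end Polynomial

theorem Nat.cast_choose_succ_right_eq {R : Type*} [CommRing R] (n k : ℕ) :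
    ((k : R) + 1) * n.choose (k + 1) = (n - k) * n.choose k := by
  rcases le_or_gt k n with hk | hk
  · have := congrArg (Nat.cast (R := R)) (Nat.choose_succ_right_eq n k)
    push_cast [Nat.cast_sub hk] at this
    linear_combination this
  · simp [Nat.choose_eq_zero_of_lt hk, Nat.choose_eq_zero_of_lt (hk.trans k.lt_succ_self)]

theorem hyperPoly_coeff (n k : ℕ) : (hyperPoly n).coeff k = (n.choose k : ℂ) ^ 2 := by
  simp only [hyperPoly, finsetSum_coeff, coeff_C_mul, coeff_X_pow, mul_ite, mul_one, mul_zero,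
    Finset.sum_ite_eq, Finset.mem_range, Nat.lt_succ_iff]
  split_ifs with hk
  · rfl
  · simp [Nat.choose_eq_zero_of_lt (not_le.1 hk)]

theorem hyperPoly_ne_zero (n : ℕ) : hyperPoly n ≠ 0 := fun h => by
  simpa [h] using hyperPoly_coeff n 0

theorem hyperPoly_ode (n : ℕ) :
    (X - X ^ 2) * derivative (derivative (hyperPoly n))
      + (1 + C (2 * (n : ℂ) - 1) * X) * derivative (hyperPoly n)
      = C ((n : ℂ) ^ 2) * hyperPoly n := by
  rw [← sub_eq_zero]
  ext k
  -- coefficientwise this is `(k+1)² c(k+1)² = (n-k)² c(k)²` with `c = n.choose`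
  have key (j : ℕ) := congrArg (· ^ 2) (Nat.cast_choose_succ_right_eq (R := ℂ) n j)
  rw [sub_mul, add_mul, one_mul, mul_assoc (C _) X, sq X, mul_assoc X X]
  rcases k with _ | _ | k <;>
  simp only [coeff_sub, coeff_add, coeff_C_mul, coeff_X_mul, mul_coeff_zero, coeff_X_zero,
      coeff_C_zero, coeff_derivative, hyperPoly_coeff, coeff_zero]
  · linear_combination (norm := (push_cast; ring1)) key 0
  · linear_combination (norm := (push_cast; ring1)) key 1
  · linear_combination (norm := (push_cast; ring1)) key (k + 2)

theorem stmt_1_general (n : ℕ) (z : ℂ)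
    (hz : (hyperPoly n).eval z = 0)
    (hz' : ((hyperPoly n).derivative).eval z = 0) :
    z = 0 ∨ z = 1 := by
  by_contra! hz01
  have hz_ordinary : ¬(X - X ^ 2 : ℂ[X]).IsRoot z := by
    simpa [sq, ← mul_one_sub, sub_eq_zero, eq_comm (a := (1 : ℂ))] using hz01
  exact hyperPoly_ne_zero n
    (eq_zero_of_isRoot_of_isRoot_derivative_of_ode (hyperPoly_ode n) hz_ordinary hz hz')

/-- For every `n ≥ 1`, any common complex root of `f_n` and its derivative `f_n'`
must lie in `{0, 1}`. -/
theorem stmt_1 (n : ℕ) (hn : 1 ≤ n) (z : ℂ)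
    (hz : (hyperPoly n).eval z = 0)
    (hz' : ((hyperPoly n).derivative).eval z = 0) :
    z = 0 ∨ z = 1 :=
  stmt_1_general n z hz hz'
end

section
/- Let n ≥ 1 and let p_1, …, p_n be the n distinct complex roots of f_n. Then for each k ∈ {1,…,n}, 2·p_k·(1−p_k)·∑_{j≠k} 1/(p_k − p_j) + 1 + (2n−1)·p_k = 0. -/
open Polynomial

lemma coeff_hyperPoly (n m : ℕ) : (hyperPoly n).coeff m = (n.choose m : ℂ)^2 := by
  rw [hyperPoly, finset_sum_coeff]
  simp only [coeff_C_mul, coeff_X_pow, mul_ite, mul_one, mul_zero]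
  rw [Finset.sum_ite_eq (Finset.range (n+1)) m]
  split
  · rfl
  · rename_i h
    rw [Nat.choose_eq_zero_of_lt]
    · simp
    · simpa using h

lemma key (n m : ℕ) : ((m:ℂ)+1)^2 * (n.choose (m+1) : ℂ)^2
    = ((n:ℂ) - m)^2 * (n.choose m : ℂ)^2 := by
  rcases le_or_gt m n with h | h
  · have h1 : (n.choose (m+1) * (m+1) : ℂ) = (n.choose m : ℂ) * ((n - m : ℕ) : ℂ) := by
      exact_mod_cast congrArg (Nat.cast : ℕ → ℂ) (Nat.choose_succ_right_eq n m)
    have h2 : ((n - m : ℕ) : ℂ) = (n : ℂ) - m := by push_cast [h]; ring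
    rw [h2] at h1
    linear_combination (((m:ℂ)+1)*(n.choose (m+1):ℂ) + ((n:ℂ)-m)*(n.choose m : ℂ)) * h1
  · rw [Nat.choose_eq_zero_of_lt h, Nat.choose_eq_zero_of_lt (by omega)]
    simp

lemma ode (n : ℕ) :
    X * derivative (derivative (hyperPoly n))
      + C (2*(n:ℂ)-1) * (X * derivative (hyperPoly n)) + derivative (hyperPoly n)
    = X^2 * derivative (derivative (hyperPoly n)) + C ((n:ℂ)^2) * hyperPoly n := by
  rw [sq, mul_assoc]
  ext m
  rcases m with _ | _ | m
  · simp only [coeff_add, coeff_C_mul]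
    simp only [mul_coeff_zero, coeff_X_zero, zero_mul, mul_zero,
      coeff_derivative, coeff_hyperPoly, Nat.cast_zero, zero_add, add_zero]
    simp
  · simp only [coeff_add, coeff_C_mul, coeff_X_mul, mul_coeff_zero,
      coeff_derivative, coeff_hyperPoly, coeff_X_zero, zero_mul]
    linear_combination (norm := (push_cast; ring1)) key n 1
  · simp only [coeff_add, coeff_C_mul, coeff_X_mul,
      coeff_derivative, coeff_hyperPoly]
    linear_combination (norm := (push_cast; ring1)) key n (m+2)

/-- Let `n ≥ 1` and `p 1, …, p n` be the `n` distinct complex roots of `f_n`.  Then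
for each `k`, `2·p_k·(1−p_k)·∑_{j≠k} 1/(p_k − p_j) + 1 + (2n−1)·p_k = 0`. -/
theorem stmt_5 (n : ℕ) (hn : 1 ≤ n)
    (p : Fin n → ℂ) (hp : Function.Injective p)
    (hroots : hyperPoly n = ∏ j, (Polynomial.X - Polynomial.C (p j)))
    (k : Fin n) :
    2 * p k * (1 - p k) * (∑ j ∈ Finset.univ.erase k, 1 / (p k - p j))
      + 1 + (2 * (n : ℂ) - 1) * p k = 0 := by
  set q : Polynomial ℂ := ∏ j ∈ Finset.univ.erase k, (X - C (p j)) with hq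
  have hsub : ∀ j ∈ Finset.univ.erase k, p k - p j ≠ 0 := by
    intro j hj
    have : j ≠ k := (Finset.mem_erase.mp hj).1
    exact sub_ne_zero.mpr fun h => this (hp h.symm)
  have hqe : q.eval (p k) = ∏ j ∈ Finset.univ.erase k, (p k - p j) := by
    simp [hq, eval_prod]
  have hne : q.eval (p k) ≠ 0 := by
    rw [hqe]; exact Finset.prod_ne_zero_iff.mpr hsub
  have hf : hyperPoly n = (X - C (p k)) * q := by
    rw [hroots, ← Finset.mul_prod_erase _ _ (Finset.mem_univ k)]
  -- derivatives
  have hd : derivative (hyperPoly n) = q + (X - C (p k)) * derivative q := by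
    rw [hf, derivative_mul]; simp
  have hd2 : derivative (derivative (hyperPoly n))
      = 2 * derivative q + (X - C (p k)) * derivative (derivative q) := by
    rw [hd, derivative_add, derivative_mul]; simp; ring
  -- derivative of q at p k
  set S : ℂ := ∑ j ∈ Finset.univ.erase k, 1 / (p k - p j) with hS
  have hkey : (derivative q).eval (p k) = q.eval (p k) * S := by
    rw [hq]
    rw [show derivative (∏ j ∈ Finset.univ.erase k, (X - C (p j)))
        = ∑ i ∈ Finset.univ.erase k, (∏ j ∈ (Finset.univ.erase k).erase i, (X - C (p j)))
            * derivative (X - C (p i)) from derivative_prod]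
    rw [eval_finset_sum]
    rw [hS, Finset.mul_sum]
    apply Finset.sum_congr rfl
    intro i hi
    have h1 : q.eval (p k) = (p k - p i) * ∏ j ∈ (Finset.univ.erase k).erase i, (p k - p j) := by
      rw [hqe, ← Finset.mul_prod_erase _ _ hi]
    rw [eval_mul, eval_prod]
    simp only [derivative_sub, derivative_X, derivative_C, sub_zero, eval_one, mul_one,
      eval_sub, eval_X, eval_C]
    rw [h1]
    field_simp [hsub i hi]
  -- evaluate the ODE at p k
  have h0 : (hyperPoly n).eval (p k) = 0 := by rw [hf]; simp
  have hode := congrArg (eval (p k)) (ode n)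
  rw [hd2, hd, hf] at hode
  simp only [eval_add, eval_mul, eval_pow, eval_X, eval_C, mul_zero,
    eval_sub, eval_ofNat, eval_one, sub_self, zero_mul, add_zero, zero_add, hkey] at hode
  -- hode should now be an algebraic identity; conclude
  have hfin : q.eval (p k) * (2 * p k * (1 - p k) * S + 1 + (2 * (n : ℂ) - 1) * p k) = 0 := by
    linear_combination hode
  rcases mul_eq_zero.mp hfin with h | h
  · exact absurd h hne
  · exact h
end

section
/- Let n ≥ 1 and let p_1, …, p_n be the n distinct complex roots of f_n. Then ∑_{j=1}^n 1/(1 − p_j) = n/2; equivalently, f_n'(1) = (n/2)·f_n(1). -/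
open Polynomial

lemma derivative_finset_prod' {ι : Type*} [DecidableEq ι] (s : Finset ι) (f : ι → Polynomial ℂ) :
    Polynomial.derivative (∏ i ∈ s, f i)
      = ∑ i ∈ s, (∏ j ∈ s.erase i, f j) * Polynomial.derivative (f i) := by
  induction s using Finset.induction_on with
  | empty => simp
  | @insert a s ha ih =>
    rw [Finset.prod_insert ha, derivative_mul, ih, Finset.mul_sum,
      Finset.sum_insert ha, Finset.erase_insert ha]
    congr 1
    · exact mul_comm _ _
    · apply Finset.sum_congr rfl
      intro i hi
      rw [Finset.erase_insert_of_ne (by rintro rfl; exact ha hi),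
        Finset.prod_insert (fun h => ha (Finset.mem_of_mem_erase h)), mul_assoc]

/-- Let `n ≥ 1` and let `p 1, …, p n` be the `n` distinct complex roots of `f_n`.
Then `∑_{j=1}^n 1/(1 − p_j) = n/2`; equivalently, `f_n'(1) = (n/2)·f_n(1)`. -/
theorem stmt_8 (n : ℕ) (hn : 1 ≤ n)
    (p : Fin n → ℂ) (hp : Function.Injective p)
    (hroots : hyperPoly n = ∏ j, (Polynomial.X - Polynomial.C (p j))) :
    (∑ j, 1 / (1 - p j) = (n : ℂ) / 2) ∧
    ((hyperPoly n).derivative.eval 1 = ((n : ℂ) / 2) * (hyperPoly n).eval 1) := by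
  have hS : (hyperPoly n).eval 1 = ∑ j ∈ Finset.range (n + 1), ((n.choose j : ℂ)) ^ 2 := by
    rw [hyperPoly, eval_finset_sum]
    simp
  have hT : (hyperPoly n).derivative.eval 1
      = ∑ j ∈ Finset.range (n + 1), (j : ℂ) * (n.choose j : ℂ) ^ 2 := by
    rw [hyperPoly, derivative_sum, eval_finset_sum]
    apply Finset.sum_congr rfl
    intro j _
    simp [derivative_C_mul, derivative_X_pow, derivative_pow, derivative_natCast]
    ring
  -- the reflection identity
  have hrefl : ∑ j ∈ Finset.range (n + 1), (j : ℂ) * (n.choose j : ℂ) ^ 2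
      = ∑ j ∈ Finset.range (n + 1), ((n : ℂ) - j) * (n.choose j : ℂ) ^ 2 := by
    rw [← Finset.sum_range_reflect]
    apply Finset.sum_congr rfl
    intro j hj
    have hj' : j ≤ n := Nat.lt_succ_iff.mp (Finset.mem_range.mp hj)
    have h1 : n + 1 - 1 - j = n - j := by omega
    rw [h1, Nat.choose_symm hj', Nat.cast_sub hj']
  have hsplit : ∑ j ∈ Finset.range (n + 1), ((n : ℂ) - j) * (n.choose j : ℂ) ^ 2
      = (n : ℂ) * (∑ j ∈ Finset.range (n + 1), ((n.choose j : ℂ)) ^ 2)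
        - ∑ j ∈ Finset.range (n + 1), (j : ℂ) * (n.choose j : ℂ) ^ 2 := by
    rw [Finset.mul_sum, ← Finset.sum_sub_distrib]
    apply Finset.sum_congr rfl
    intro j _
    ring
  have hnum : (hyperPoly n).derivative.eval 1 = ((n : ℂ) / 2) * (hyperPoly n).eval 1 := by
    rw [hT, hS]
    linear_combination (hrefl + hsplit) / 2
  refine ⟨?_, hnum⟩
  -- f(1) ≠ 0
  have hSnat : (hyperPoly n).eval 1 = ((∑ j ∈ Finset.range (n + 1), (n.choose j) ^ 2 : ℕ) : ℂ) := by
    rw [hS]; push_cast; ring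
  have hSpos : 0 < ∑ j ∈ Finset.range (n + 1), (n.choose j) ^ 2 := by
    apply Finset.sum_pos'
    · intro i _; positivity
    · exact ⟨0, Finset.mem_range.mpr (Nat.succ_pos n), by simp⟩
  have hf1 : (hyperPoly n).eval 1 ≠ 0 := by
    rw [hSnat]
    exact_mod_cast hSpos.ne'
  have hEvalProd : (hyperPoly n).eval 1 = ∏ j, ((1 : ℂ) - p j) := by
    rw [hroots]; simp [eval_prod]
  have hfac : ∀ j, (1 : ℂ) - p j ≠ 0 := by
    intro j h
    apply hf1
    rw [hEvalProd]
    exact Finset.prod_eq_zero (Finset.mem_univ j) h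
  have hDerivProd : (hyperPoly n).derivative.eval 1
      = ∑ j, ∏ k ∈ Finset.univ.erase j, ((1 : ℂ) - p k) := by
    rw [hroots, derivative_finset_prod']
    rw [eval_finset_sum]
    apply Finset.sum_congr rfl
    intro j _
    simp [eval_prod]
  have hsum : ∑ j, 1 / (1 - p j)
      = (∑ j, ∏ k ∈ Finset.univ.erase j, ((1 : ℂ) - p k)) / ∏ j, ((1 : ℂ) - p j) := by
    rw [Finset.sum_div]
    apply Finset.sum_congr rfl
    intro j _
    rw [← Finset.mul_prod_erase _ _ (Finset.mem_univ j)]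
    have herase : (∏ k ∈ Finset.univ.erase j, ((1 : ℂ) - p k)) ≠ 0 :=
      Finset.prod_ne_zero_iff.mpr fun k _ => hfac k
    rw [eq_div_iff (mul_ne_zero (hfac j) herase)]
    rw [one_div, inv_mul_cancel_left₀ (hfac j)]
  rw [hsum, ← hDerivProd, ← hEvalProd, hnum, mul_div_assoc, div_self hf1, mul_one]
end

section
/- For every natural number n ≥ 1 and every complex number z ≠ 1, f_n(z) = (1−z)^n · L_n((1+z)/(1−z)), where L_n is the n-th Legendre polynomial defined by the Rodrigues formula L_n(x) = (1/(2^n · n!)) · (d/dx)^n [(x² − 1)^n]. -/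
open Polynomial

/-- The `n`-th Legendre polynomial, defined by the Rodrigues formula
`L_n(x) = (1/(2^n · n!)) · (d/dx)^n [(x² − 1)^n]`. -/
noncomputable def legendrePoly (n : ℕ) : Polynomial ℂ :=
  Polynomial.C (1 / (2 ^ n * (n.factorial : ℂ))) *
    (Polynomial.derivative^[n] ((Polynomial.X ^ 2 - 1) ^ n))

/-! Writing `L_n` in the basis `(X - 1)^k (X + 1)^(n - k)` makes the Möbius substitution
`x = (1 + z)/(1 - z)` send each basis element to `2^n z^k / (1 - z)^n`, because
`x - 1 = 2z/(1 - z)` and `x + 1 = 2/(1 - z)`. In that basis the coefficients of `L_n` are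
`binom(n,k)^2 / 2^n`, by the Leibniz rule applied to `(X² - 1)^n = (X - 1)^n (X + 1)^n`. -/

theorem iterate_derivative_X_sq_sub_one_pow {R : Type*} [CommRing R] (n : ℕ) :
    derivative^[n] (((X : R[X]) ^ 2 - 1) ^ n) =
      ∑ k ∈ Finset.range (n + 1),
        ((n.factorial * n.choose k ^ 2 : ℕ) : R[X]) * ((X - 1) ^ k * (X + 1) ^ (n - k)) := by
  have hfactor : ((X : R[X]) ^ 2 - 1) ^ n = (X - C 1) ^ n * (X + C 1) ^ n := by
    rw [← mul_pow, C_1]; ring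
  rw [hfactor, iterate_derivative_mul]
  refine Finset.sum_congr rfl fun k hk => ?_
  have hkn : k ≤ n := Nat.le_of_lt_succ (Finset.mem_range.mp hk)
  rw [iterate_derivative_X_sub_pow, iterate_derivative_X_add_pow, Nat.sub_sub_self hkn]
  have hcoeff : n.choose k * (n.descFactorial (n - k) * n.descFactorial k) =
      n.factorial * n.choose k ^ 2 := by
    rw [Nat.descFactorial_eq_factorial_mul_choose, Nat.descFactorial_eq_factorial_mul_choose,
      Nat.choose_symm hkn, ← Nat.choose_mul_factorial_mul_factorial hkn]
    ring
  rw [smul_mul_smul_comm, smul_smul, hcoeff, nsmul_eq_mul, C_1]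

theorem legendrePoly_eq_sum (n : ℕ) :
    legendrePoly n = ∑ k ∈ Finset.range (n + 1),
      C ((n.choose k : ℂ) ^ 2 / 2 ^ n) * ((X - 1) ^ k * (X + 1) ^ (n - k)) := by
  have hfac : (n.factorial : ℂ) ≠ 0 := Nat.cast_ne_zero.mpr n.factorial_ne_zero
  rw [legendrePoly, iterate_derivative_X_sq_sub_one_pow, Finset.mul_sum]
  refine Finset.sum_congr rfl fun k _ => ?_
  rw [← mul_assoc, ← C_eq_natCast, ← C_mul]
  congr 2
  push_cast
  field_simp

theorem one_sub_pow_mul_moebius {K : Type*} [Field K] {z : K} (hz : z ≠ 1) {k n : ℕ}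
    (hkn : k ≤ n) :
    (1 - z) ^ n * (((1 + z) / (1 - z) - 1) ^ k * ((1 + z) / (1 - z) + 1) ^ (n - k)) =
      2 ^ n * z ^ k := by
  have hw : 1 - z ≠ 0 := sub_ne_zero.mpr hz.symm
  rw [div_sub_one hw, div_add_one hw, div_pow, div_pow]
  obtain ⟨m, rfl⟩ := Nat.exists_eq_add_of_le hkn
  rw [Nat.add_sub_cancel_left]
  field_simp
  ring

theorem stmt_10_general (n : ℕ) (z : ℂ) (hz : z ≠ 1) :
    (hyperPoly n).eval z = (1 - z) ^ n * (legendrePoly n).eval ((1 + z) / (1 - z)) := by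
  rw [legendrePoly_eq_sum, hyperPoly, eval_finsetSum, eval_finsetSum, Finset.mul_sum]
  refine Finset.sum_congr rfl fun k hk => ?_
  have hkn : k ≤ n := Nat.le_of_lt_succ (Finset.mem_range.mp hk)
  simp only [eval_mul, eval_C, eval_pow, eval_X, eval_sub, eval_add, eval_one]
  rw [mul_left_comm, one_sub_pow_mul_moebius hz hkn]
  field_simp

/-- For every `n ≥ 1` and every complex `z ≠ 1`,
`f_n(z) = (1−z)^n · L_n((1+z)/(1−z))`. -/
theorem stmt_10 (n : ℕ) (hn : 1 ≤ n) (z : ℂ) (hz : z ≠ 1) :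
    (hyperPoly n).eval z = (1 - z) ^ n * (legendrePoly n).eval ((1 + z) / (1 - z)) :=
  stmt_10_general n z hz
end

section
/- Let p_1, …, p_m be pairwise distinct nonzero complex numbers and α_1, …, α_m complex numbers. For each k and every sufficiently small radius r > 0 (so that the closed disc of radius r about p_k contains no other p_j and not 0), the circle integral (1/(2πi)) ∮_{|z−p_k|=r} z·(∑_{j=1}^m α_j/(z−p_j))² dz equals p_k·α_k·( 2·∑_{j≠k} α_j/(p_k − p_j) + α_k/p_k ). -/
open Complex Metric

theorem circleIntegral_add4 (f₁ f₂ f₃ f₄ : ℂ → ℂ) {c : ℂ} {R : ℝ}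
    (h1 : CircleIntegrable f₁ c R) (h2 : CircleIntegrable f₂ c R)
    (h3 : CircleIntegrable f₃ c R) (h4 : CircleIntegrable f₄ c R) :
    (∮ z in C(c, R), f₁ z + f₂ z + f₃ z + f₄ z)
      = (∮ z in C(c, R), f₁ z) + (∮ z in C(c, R), f₂ z)
        + (∮ z in C(c, R), f₃ z) + ∮ z in C(c, R), f₄ z := by
  simp only [circleIntegral, smul_add,
    intervalIntegral.integral_add ((h1.out.add h2.out).add h3.out) h4.out,
    intervalIntegral.integral_add (h1.out.add h2.out) h3.out,
    intervalIntegral.integral_add h1.out h2.out]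


/-- Let `p 1, …, p m` be pairwise distinct nonzero complex numbers and `α 1, …, α m`
complex numbers.  For each `k` and every small enough radius `r > 0` (so that the
closed disc of radius `r` about `p k` contains no other `p j` and not `0`), the
circle integral `(1/(2πi)) ∮_{|z−p_k|=r} z·(∑_j α_j/(z−p_j))² dz` equals
`p_k·α_k·(2·∑_{j≠k} α_j/(p_k − p_j) + α_k/p_k)`. -/
theorem stmt_11 (m : ℕ) (p : Fin m → ℂ) (α : Fin m → ℂ)
    (hp : Function.Injective p) (hp0 : ∀ j, p j ≠ 0)
    (k : Fin m) (r : ℝ) (hr : 0 < r)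
    (hdisc : ∀ j, j ≠ k → p j ∉ Metric.closedBall (p k) r)
    (h0disc : (0 : ℂ) ∉ Metric.closedBall (p k) r) :
    (1 / (2 * Real.pi * Complex.I)) *
        (∮ z in C(p k, r), z * (∑ j, α j / (z - p j)) ^ 2)
      = p k * α k *
        (2 * (∑ j ∈ Finset.univ.erase k, α j / (p k - p j)) + α k / p k) := by
  set g : ℂ → ℂ := fun z => ∑ j ∈ Finset.univ.erase k, α j / (z - p j) with hg
  -- points of the closed ball are distinct from the other poles
  have hne : ∀ z ∈ Metric.closedBall (p k) r, ∀ j, j ≠ k → z - p j ≠ 0 := by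
    intro z hz j hj h
    rw [sub_eq_zero] at h
    exact hdisc j hj (h ▸ hz)
  have hgA : ∀ z ∈ Metric.closedBall (p k) r, DifferentiableAt ℂ g z := by
    intro z hz
    apply DifferentiableAt.fun_sum
    intro j hj
    exact (differentiableAt_const _).div (differentiableAt_id.sub (differentiableAt_const _))
      (hne z hz j (Finset.mem_erase.mp hj).1)
  have hf1A : ∀ z ∈ Metric.closedBall (p k) r,
      DifferentiableAt ℂ (fun z => z * g z) z := fun z hz =>
    differentiableAt_id.mul (hgA z hz)
  have hf2A : ∀ z ∈ Metric.closedBall (p k) r,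
      DifferentiableAt ℂ (fun z => z * g z ^ 2) z := fun z hz =>
    differentiableAt_id.mul ((hgA z hz).pow 2)
  have hsub : Metric.sphere (p k) r ⊆ Metric.closedBall (p k) r := sphere_subset_closedBall
  have hzk : ∀ z ∈ Metric.sphere (p k) r, z - p k ≠ 0 := by
    intro z hz h
    rw [sub_eq_zero] at h
    rw [mem_sphere_iff_norm, h, sub_self, norm_zero] at hz
    exact hr.ne hz
  -- pointwise decomposition on the circle
  have key : Set.EqOn (fun z => z * (∑ j, α j / (z - p j)) ^ 2)
      (fun z => α k ^ 2 * (z - p k) ^ (-1 : ℤ) + (α k ^ 2 * p k) * (z - p k) ^ (-2 : ℤ)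
        + (2 * α k) * ((z - p k)⁻¹ • (z * g z)) + z * g z ^ 2)
      (Metric.sphere (p k) r) := by
    intro z hz
    have h1 : z - p k ≠ 0 := hzk z hz
    have hsum : (∑ j, α j / (z - p j)) = α k / (z - p k) + g z :=
      (Finset.add_sum_erase _ (fun j => α j / (z - p j)) (Finset.mem_univ k)).symm
    simp only [hsum, smul_eq_mul, zpow_neg, zpow_one, zpow_two]
    field_simp
    ring
  rw [circleIntegral.integral_congr hr.le key]
  -- integrability of the pieces
  have hgc : ContinuousOn g (Metric.sphere (p k) r) := fun z hz =>
    ((hgA z (hsub hz)).continuousAt).continuousWithinAt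
  have hc1 : CircleIntegrable (fun z => α k ^ 2 * (z - p k) ^ (-1 : ℤ)) (p k) r := by
    apply ContinuousOn.circleIntegrable hr.le
    exact continuousOn_const.mul ((continuousOn_id.sub continuousOn_const).zpow₀ _
      (fun z hz => Or.inl (hzk z hz)))
  have hc2 : CircleIntegrable (fun z => (α k ^ 2 * p k) * (z - p k) ^ (-2 : ℤ)) (p k) r := by
    apply ContinuousOn.circleIntegrable hr.le
    exact continuousOn_const.mul ((continuousOn_id.sub continuousOn_const).zpow₀ _
      (fun z hz => Or.inl (hzk z hz)))
  have hc3 : CircleIntegrable (fun z => (2 * α k) * ((z - p k)⁻¹ • (z * g z))) (p k) r := by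
    apply ContinuousOn.circleIntegrable hr.le
    exact continuousOn_const.mul (((continuousOn_id.sub continuousOn_const).inv₀
      (fun z hz => hzk z hz)).smul (continuousOn_id.mul hgc))
  have hc4 : CircleIntegrable (fun z => z * g z ^ 2) (p k) r := by
    apply ContinuousOn.circleIntegrable hr.le
    exact continuousOn_id.mul (hgc.pow 2)
  rw [show (∮ z in C(p k, r), (α k ^ 2 * (z - p k) ^ (-1 : ℤ)
        + (α k ^ 2 * p k) * (z - p k) ^ (-2 : ℤ)
        + (2 * α k) * ((z - p k)⁻¹ • (z * g z)) + z * g z ^ 2))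
      = (∮ z in C(p k, r), α k ^ 2 * (z - p k) ^ (-1 : ℤ))
        + (∮ z in C(p k, r), (α k ^ 2 * p k) * (z - p k) ^ (-2 : ℤ))
        + (∮ z in C(p k, r), (2 * α k) * ((z - p k)⁻¹ • (z * g z)))
        + ∮ z in C(p k, r), z * g z ^ 2
    from circleIntegral_add4 _ _ _ _ hc1 hc2 hc3 hc4]
  have e1 : (∮ z in C(p k, r), α k ^ 2 * (z - p k) ^ (-1 : ℤ)) = α k ^ 2 * (2 * Real.pi * I) := by
    rw [circleIntegral.integral_const_mul]
    congr 1
    simp only [zpow_neg, zpow_one]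
    exact circleIntegral.integral_sub_inv_of_mem_ball (mem_ball_self hr)
  have e2 : (∮ z in C(p k, r), (α k ^ 2 * p k) * (z - p k) ^ (-2 : ℤ)) = 0 := by
    rw [circleIntegral.integral_const_mul,
      circleIntegral.integral_sub_zpow_of_ne (by decide) (p k) (p k) r, mul_zero]
  have e3 : (∮ z in C(p k, r), (2 * α k) * ((z - p k)⁻¹ • (z * g z)))
      = (2 * α k) * ((2 * Real.pi * I) * (p k * g (p k))) := by
    have heq : (∮ z in C(p k, r), 2 * α k * ((z - p k)⁻¹ • (z * g z)))
        = 2 * α k * ∮ z in C(p k, r), (z - p k)⁻¹ • (z * g z) := by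
      simp only [smul_eq_mul]
      exact circleIntegral.integral_const_mul _ _ _ _
    rw [heq]
    have := DifferentiableOn.circleIntegral_sub_inv_smul
      (f := fun z => z * g z) (c := p k) (R := r) (w := p k)
      (fun z hz => (hf1A z hz).differentiableWithinAt) (mem_ball_self hr)
    simp only [smul_eq_mul] at this ⊢
    rw [this]
  have e4 : (∮ z in C(p k, r), z * g z ^ 2) = 0 := by
    apply Complex.circleIntegral_eq_zero_of_differentiable_on_off_countable hr.le
      Set.countable_empty
      (fun z hz => ((hf2A z hz).continuousAt).continuousWithinAt)
    intro z hz
    exact hf2A z (ball_subset_closedBall hz.1)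
  rw [e1, e2, e3, e4]
  have hπ : (2 * Real.pi * I : ℂ) ≠ 0 := by
    simp [Real.pi_ne_zero, I_ne_zero]
  have hgpk : g (p k) = ∑ j ∈ Finset.univ.erase k, α j / (p k - p j) := rfl
  rw [hgpk]
  set G := ∑ j ∈ Finset.univ.erase k, α j / (p k - p j) with hG
  rw [one_div, inv_mul_eq_div, div_eq_iff hπ]
  field_simp [hp0 k]
  ring
end

section
/- Let p_1, …, p_m be pairwise distinct nonzero complex numbers and α_1, …, α_m complex numbers, and define the balance quantities F_k = 2·∑_{j≠k} α_j/(p_k − p_j) + α_k/p_k. Then ∑_{k=1}^m p_k·α_k·F_k = (∑_{k=1}^m α_k)². In particular, if ∑_k α_k = 0 then ∑_k p_k·α_k·F_k = 0, so the vanishing of any m−1 of the quantities p_k·α_k·F_k implies the vanishing of the remaining one. -/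
/-- Let `p 1, …, p m` be pairwise distinct nonzero complex numbers, `α 1, …, α m`
complex numbers, and `F_k = 2·∑_{j≠k} α_j/(p_k − p_j) + α_k/p_k` the balance
quantities.  Then `∑_k p_k·α_k·F_k = (∑_k α_k)²`.  In particular, if `∑_k α_k = 0`
then `∑_k p_k·α_k·F_k = 0`, so the vanishing of any `m−1` of the quantities
`p_k·α_k·F_k` implies the vanishing of the remaining one. -/
theorem stmt_12 (m : ℕ) (p : Fin m → ℂ) (α : Fin m → ℂ)
    (hp : Function.Injective p) (hp0 : ∀ j, p j ≠ 0)
    (F : Fin m → ℂ)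
    (hF : ∀ k, F k = 2 * (∑ j ∈ Finset.univ.erase k, α j / (p k - p j)) + α k / p k) :
    (∑ k, p k * α k * F k = (∑ k, α k) ^ 2) ∧
    (∑ k, α k = 0 → ∑ k, p k * α k * F k = 0) ∧
    (∑ k, α k = 0 → ∀ k₀ : Fin m, (∀ k, k ≠ k₀ → p k * α k * F k = 0) →
      p k₀ * α k₀ * F k₀ = 0) := by
  have hne : ∀ k j : Fin m, j ≠ k → p k - p j ≠ 0 := by
    intro k j h
    exact sub_ne_zero.mpr (fun e => h (hp e).symm)
  have key : ∑ k, p k * α k * F k = (∑ k, α k) ^ 2 := by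
    have h1 : ∀ k, p k * α k * F k
        = (∑ j ∈ Finset.univ.erase k, 2 * p k * α k * α j / (p k - p j)) + α k * α k := by
      intro k
      rw [hF k, mul_add]
      congr 1
      · rw [Finset.mul_sum, Finset.mul_sum]
        refine Finset.sum_congr rfl fun j hj => ?_
        ring
      · rw [mul_comm (p k) (α k), mul_assoc, mul_div_cancel₀ _ (hp0 k)]
    set f : Fin m → Fin m → ℂ := fun k j => 2 * p k * α k * α j / (p k - p j) with hf
    have hswap : ∑ k, ∑ j ∈ Finset.univ.erase k, f k j
        = ∑ k, ∑ j ∈ Finset.univ.erase k, f j k := by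
      exact Finset.sum_comm' (fun x y => by
        simp [Finset.mem_erase, eq_comm, and_comm])
    have hT : ∑ k, ∑ j ∈ Finset.univ.erase k, f k j
        = ∑ k, ∑ j ∈ Finset.univ.erase k, α k * α j := by
      have h2 : (2:ℂ) * (∑ k, ∑ j ∈ Finset.univ.erase k, f k j)
          = 2 * (∑ k, ∑ j ∈ Finset.univ.erase k, α k * α j) := by
        calc (2:ℂ) * (∑ k, ∑ j ∈ Finset.univ.erase k, f k j)
            = (∑ k, ∑ j ∈ Finset.univ.erase k, f k j)
              + (∑ k, ∑ j ∈ Finset.univ.erase k, f j k) := by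
              rw [← hswap]; ring
          _ = ∑ k, ∑ j ∈ Finset.univ.erase k, (f k j + f j k) := by
              rw [← Finset.sum_add_distrib]
              exact Finset.sum_congr rfl fun k _ => (Finset.sum_add_distrib).symm
          _ = ∑ k, ∑ j ∈ Finset.univ.erase k, 2 * (α k * α j) := by
              refine Finset.sum_congr rfl fun k _ => Finset.sum_congr rfl fun j hj => ?_
              have hjk : j ≠ k := Finset.ne_of_mem_erase hj
              have h1 := hne k j hjk
              have h2 := hne j k hjk.symm
              simp only [hf]
              field_simp
              ring
          _ = 2 * (∑ k, ∑ j ∈ Finset.univ.erase k, α k * α j) := by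
              rw [Finset.mul_sum]
              exact Finset.sum_congr rfl fun k _ => (Finset.mul_sum _ _ _).symm
      exact mul_left_cancel₀ two_ne_zero h2
    calc ∑ k, p k * α k * F k
        = ∑ k, ((∑ j ∈ Finset.univ.erase k, f k j) + α k * α k) :=
          Finset.sum_congr rfl fun k _ => h1 k
      _ = ∑ k, ((∑ j ∈ Finset.univ.erase k, α k * α j) + α k * α k) := by
          rw [Finset.sum_add_distrib, hT, ← Finset.sum_add_distrib]
      _ = ∑ k, ∑ j, α k * α j := by
          refine Finset.sum_congr rfl fun k _ => ?_
          rw [add_comm]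
          exact Finset.add_sum_erase _ (fun j => α k * α j) (Finset.mem_univ k)
      _ = (∑ k, α k) ^ 2 := by
          rw [sq, Finset.sum_mul_sum]
  refine ⟨key, fun h0 => by rw [key, h0]; ring, fun h0 k₀ hvan => ?_⟩
  have hsum : ∑ k, p k * α k * F k = 0 := by rw [key, h0]; ring
  have := Finset.sum_eq_single k₀ (fun k _ hk => hvan k hk) (fun h => absurd (Finset.mem_univ k₀) h)
  rw [hsum] at this
  exact this.symm
end

section
/- Let p_1, …, p_m be pairwise distinct nonzero complex numbers and α_1, …, α_m complex numbers. For every radius R > max_j |p_j|, the circle integral (1/(2πi)) ∮_{|z|=R} z·(∑_{j=1}^m α_j/(z−p_j))² dz equals (∑_{j=1}^m α_j)². -/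
/-!
Expanding the square, `z (∑ⱼ αⱼ/(z - pⱼ))² = ∑ⱼ ∑ₖ αⱼ αₖ · z/((z - pⱼ)(z - pₖ))`, so it suffices
that `∮ z/((z - a)(z - b)) dz = 2πi` whenever `a` and `b` lie inside the circle. Writing
`z = (z - a) + a` splits this integrand into `1/(z - b)`, with integral `2πi`, and
`a/((z - a)(z - b))`, whose integral vanishes: for `a ≠ b` it is a difference of two simple poles
with equal residues, and for `a = b` it is the derivative of `-a/(z - a)`.
-/

open Complex Metric Real

lemma CircleIntegrable.const_mul {f : ℂ → ℂ} {c : ℂ} {R : ℝ} (hf : CircleIntegrable f c R)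
    (a : ℂ) : CircleIntegrable (fun z => a * f z) c R :=
  IntervalIntegrable.const_mul hf a

section CircleIntegral

variable {c a b : ℂ} {R : ℝ}

lemma sub_ne_zero_of_mem_sphere_of_mem_ball {z : ℂ} (hz : z ∈ sphere c R) (ha : a ∈ ball c R) :
    z - a ≠ 0 :=
  sub_ne_zero.2 (sphere_disjoint_ball.ne_of_mem hz ha)

lemma continuousOn_sub_inv_sphere (ha : a ∈ ball c R) :
    ContinuousOn (fun z => (z - a)⁻¹) (sphere c R) :=
  (continuousOn_id.sub continuousOn_const).inv₀ fun _ hz =>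
    sub_ne_zero_of_mem_sphere_of_mem_ball hz ha

lemma circleIntegrable_sub_inv_mul_sub_inv (ha : a ∈ ball c R) (hb : b ∈ ball c R) :
    CircleIntegrable (fun z => (z - a)⁻¹ * (z - b)⁻¹) c R :=
  ((continuousOn_sub_inv_sphere ha).mul (continuousOn_sub_inv_sphere hb)).circleIntegrable
    (pos_of_mem_ball ha).le

lemma circleIntegral_sub_inv_mul_sub_inv (ha : a ∈ ball c R) (hb : b ∈ ball c R) :
    (∮ z in C(c, R), (z - a)⁻¹ * (z - b)⁻¹) = 0 := by
  have hR : 0 ≤ R := (pos_of_mem_ball ha).le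
  rcases eq_or_ne a b with rfl | hab
  · calc (∮ z in C(c, R), (z - a)⁻¹ * (z - a)⁻¹) = ∮ z in C(c, R), (z - a) ^ (-2 : ℤ) :=
          circleIntegral.integral_congr hR fun z _ => by simp [zpow_neg, sq]
      _ = 0 := circleIntegral.integral_sub_zpow_of_ne (by decide) _ _ _
  · have hint : ∀ w ∈ ball c R, CircleIntegrable (fun z => (z - w)⁻¹) c R :=
      fun w hw => (continuousOn_sub_inv_sphere hw).circleIntegrable hR
    calc (∮ z in C(c, R), (z - a)⁻¹ * (z - b)⁻¹)
        = ∮ z in C(c, R), (a - b)⁻¹ * ((z - a)⁻¹ - (z - b)⁻¹) := by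
          refine circleIntegral.integral_congr hR fun z hz => ?_
          have hza := sub_ne_zero_of_mem_sphere_of_mem_ball hz ha
          have hzb := sub_ne_zero_of_mem_sphere_of_mem_ball hz hb
          field_simp [sub_ne_zero.2 hab]
          ring
      _ = 0 := by
        rw [circleIntegral.integral_const_mul, circleIntegral.integral_sub (hint a ha) (hint b hb),
          circleIntegral.integral_sub_inv_of_mem_ball ha,
          circleIntegral.integral_sub_inv_of_mem_ball hb, sub_self, mul_zero]

lemma circleIntegrable_mul_sub_inv_mul_sub_inv (ha : a ∈ ball c R) (hb : b ∈ ball c R) :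
    CircleIntegrable (fun z => z * ((z - a)⁻¹ * (z - b)⁻¹)) c R :=
  (continuousOn_id.mul ((continuousOn_sub_inv_sphere ha).mul
    (continuousOn_sub_inv_sphere hb))).circleIntegrable (pos_of_mem_ball ha).le

lemma circleIntegral_mul_sub_inv_mul_sub_inv (ha : a ∈ ball c R) (hb : b ∈ ball c R) :
    (∮ z in C(c, R), z * ((z - a)⁻¹ * (z - b)⁻¹)) = 2 * π * I := by
  have hR : 0 ≤ R := (pos_of_mem_ball ha).le
  calc (∮ z in C(c, R), z * ((z - a)⁻¹ * (z - b)⁻¹))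
      = ∮ z in C(c, R), (z - b)⁻¹ + a * ((z - a)⁻¹ * (z - b)⁻¹) := by
        refine circleIntegral.integral_congr hR fun z hz => ?_
        have hza := sub_ne_zero_of_mem_sphere_of_mem_ball hz ha
        field_simp
        ring
    _ = 2 * π * I := by
      rw [circleIntegral.integral_add ((continuousOn_sub_inv_sphere hb).circleIntegrable hR)
          ((circleIntegrable_sub_inv_mul_sub_inv ha hb).const_mul a),
        circleIntegral.integral_const_mul, circleIntegral_sub_inv_mul_sub_inv ha hb,
        circleIntegral.integral_sub_inv_of_mem_ball hb, mul_zero, add_zero]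

end CircleIntegral

lemma mul_sum_div_sub_sq {ι K : Type*} [Fintype ι] [Field K] (α p : ι → K) (z : K) :
    z * (∑ j, α j / (z - p j)) ^ 2
      = ∑ jk : ι × ι, α jk.1 * α jk.2 * (z * ((z - p jk.1)⁻¹ * (z - p jk.2)⁻¹)) := by
  rw [sq, Finset.sum_mul_sum, Fintype.sum_prod_type, Finset.mul_sum]
  refine Finset.sum_congr rfl fun _ _ => ?_
  rw [Finset.mul_sum]
  refine Finset.sum_congr rfl fun _ _ => ?_
  ring

theorem stmt_13_general (m : ℕ) (p : Fin m → ℂ) (α : Fin m → ℂ)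
    (R : ℝ) (hR : ∀ j, ‖p j‖ < R) :
    (1 / (2 * Real.pi * Complex.I)) *
        (∮ z in C(0, R), z * (∑ j, α j / (z - p j)) ^ 2)
      = (∑ j, α j) ^ 2 := by
  have hp : ∀ j, p j ∈ ball (0 : ℂ) R := fun j => mem_ball_zero_iff.2 (hR j)
  simp_rw [mul_sum_div_sub_sq]
  rw [circleIntegral.integral_fun_sum fun jk _ =>
    (circleIntegrable_mul_sub_inv_mul_sub_inv (hp jk.1) (hp jk.2)).const_mul _]
  simp_rw [circleIntegral.integral_const_mul,
    circleIntegral_mul_sub_inv_mul_sub_inv (hp _) (hp _), ← Finset.sum_mul,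
    Fintype.sum_prod_type, ← Finset.mul_sum, ← Finset.sum_mul]
  field_simp [two_pi_I_ne_zero]

/-- Let `p 1, …, p m` be pairwise distinct nonzero complex numbers and `α 1, …, α m`
complex numbers.  For every radius `R > max_j |p_j|`, the circle integral
`(1/(2πi)) ∮_{|z|=R} z·(∑_j α_j/(z−p_j))² dz` equals `(∑_j α_j)²`. -/
theorem stmt_13 (m : ℕ) (p : Fin m → ℂ) (α : Fin m → ℂ)
    (hp : Function.Injective p) (hp0 : ∀ j, p j ≠ 0)
    (R : ℝ) (hR : ∀ j, ‖p j‖ < R) :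
    (1 / (2 * Real.pi * Complex.I)) *
        (∮ z in C(0, R), z * (∑ j, α j / (z - p j)) ^ 2)
      = (∑ j, α j) ^ 2 :=
  stmt_13_general m p α R hR
end

section
/- Set α_1 = 1/4, α_2 = 3/4, α_3 = −1 and p_1 = −(11 + 3√13)/2, p_2 = (−7 + √13)/6, p_3 = 1 (regarded as complex numbers). Then ∑_{k=1}^3 α_k = 0, the p_k are pairwise distinct and nonzero, and the balance quantities vanish: F_k = 2·∑_{j≠k} α_j/(p_k − p_j) + α_k/p_k = 0 for k = 1, 2, 3. -/
set_option maxHeartbeats 1000000 in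
/-- Set `α = (1/4, 3/4, −1)` and `p = (−(11+3√13)/2, (−7+√13)/6, 1)`, regarded as
complex numbers.  Then `∑ α_k = 0`, the `p_k` are pairwise distinct and nonzero, and
the balance quantities vanish: `F_k = 2·∑_{j≠k} α_j/(p_k − p_j) + α_k/p_k = 0` for
`k = 1, 2, 3`. -/
theorem stmt_14
    (α : Fin 3 → ℂ) (p : Fin 3 → ℂ)
    (hα : α = ![1 / 4, 3 / 4, -1])
    (hp : p = ![-((11 + 3 * (Real.sqrt 13 : ℂ)) / 2),
                ((-7 + (Real.sqrt 13 : ℂ)) / 6), 1]) :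
    (∑ k, α k = 0) ∧
    Function.Injective p ∧
    (∀ k, p k ≠ 0) ∧
    (∀ k : Fin 3,
      2 * (∑ j ∈ Finset.univ.erase k, α j / (p k - p j)) + α k / p k = 0) := by
  subst hα hp
  set s : ℝ := Real.sqrt 13 with hs
  have hs0 : 0 ≤ s := Real.sqrt_nonneg 13
  have hs2 : s ^ 2 = 13 := Real.sq_sqrt (by norm_num)
  have hs7 : s < 7 := by
    nlinarith [hs2]
  have ht2 : (s : ℂ) ^ 2 = 13 := by exact_mod_cast congrArg (Complex.ofReal) hs2
  -- real distinctness facts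
  have h01 : -((11 + 3 * s) / 2) ≠ (-7 + s) / 6 := by intro h; nlinarith
  have h02 : -((11 + 3 * s) / 2) ≠ 1 := by intro h; nlinarith
  have h12 : (-7 + s) / 6 ≠ 1 := by intro h; nlinarith
  have h0 : -((11 + 3 * s) / 2) ≠ 0 := by intro h; nlinarith
  have h1 : (-7 + s) / 6 ≠ 0 := by intro h; nlinarith
  -- complex versions
  have c01 : -((11 + 3 * (s : ℂ)) / 2) ≠ (-7 + (s : ℂ)) / 6 := by
    intro h; apply h01; exact_mod_cast h
  have c02 : -((11 + 3 * (s : ℂ)) / 2) ≠ 1 := by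
    intro h; apply h02; exact_mod_cast h
  have c12 : (-7 + (s : ℂ)) / 6 ≠ 1 := by
    intro h; apply h12; exact_mod_cast h
  have c0 : -((11 + 3 * (s : ℂ)) / 2) ≠ 0 := by
    intro h; apply h0; exact_mod_cast h
  have c1 : (-7 + (s : ℂ)) / 6 ≠ 0 := by
    intro h; apply h1; exact_mod_cast h
  have d01 : -((11 + 3 * (s : ℂ)) / 2) - (-7 + (s : ℂ)) / 6 ≠ 0 := sub_ne_zero.mpr c01
  have d02 : -((11 + 3 * (s : ℂ)) / 2) - 1 ≠ 0 := sub_ne_zero.mpr c02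
  have d12 : (-7 + (s : ℂ)) / 6 - 1 ≠ 0 := sub_ne_zero.mpr c12
  refine ⟨?_, ?_, ?_, ?_⟩
  · simp [Fin.sum_univ_three]; ring
  · intro a b h
    fin_cases a <;> fin_cases b <;> simp_all
  · intro k; fin_cases k <;> simp_all
  · have d10 := sub_ne_zero.mpr (Ne.symm c01)
    have d20 := sub_ne_zero.mpr (Ne.symm c02)
    have d21 := sub_ne_zero.mpr (Ne.symm c12)
    intro k
    fin_cases k
    · rw [Finset.sum_erase _ (by simp), Fin.sum_univ_three]
      simp only [Fin.mk_zero, Fin.mk_one, Fin.reduceFinMk, Fin.isValue, Matrix.cons_val_zero,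
        Matrix.cons_val_one, Matrix.head_cons, Matrix.cons_val_two, Matrix.tail_cons,
        sub_self, div_zero, zero_add]
      have hA : (3 / 4 : ℂ) / (-((11 + 3 * (s:ℂ)) / 2) - (-7 + (s:ℂ)) / 6)
          = 3 / 16 - 15 / 208 * (s:ℂ) := by
        rw [div_eq_iff d01]; linear_combination (-25 / 208 : ℂ) * ht2
      have hB : (-1 : ℂ) / (-((11 + 3 * (s:ℂ)) / 2) - 1)
          = 1 / 2 - 3 / 26 * (s:ℂ) := by
        rw [div_eq_iff d02]; linear_combination (-9 / 52 : ℂ) * ht2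
      have hC : (1 / 4 : ℂ) / -((11 + 3 * (s:ℂ)) / 2)
          = -11 / 8 + 3 / 8 * (s:ℂ) := by
        rw [div_eq_iff c0]; linear_combination (9 / 16 : ℂ) * ht2
      rw [hA, hB, hC]; ring
    · rw [Finset.sum_erase _ (by simp), Fin.sum_univ_three]
      simp only [Fin.mk_zero, Fin.mk_one, Fin.reduceFinMk, Fin.isValue, Matrix.cons_val_zero,
        Matrix.cons_val_one, Matrix.head_cons, Matrix.cons_val_two, Matrix.tail_cons,
        sub_self, div_zero, zero_add, add_zero]
      have hA : (1 / 4 : ℂ) / ((-7 + (s:ℂ)) / 6 - -((11 + 3 * (s:ℂ)) / 2))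
          = -1 / 16 + 5 / 208 * (s:ℂ) := by
        rw [div_eq_iff d10]; linear_combination (-25 / 624 : ℂ) * ht2
      have hB : (-1 : ℂ) / ((-7 + (s:ℂ)) / 6 - 1)
          = 1 / 2 + 1 / 26 * (s:ℂ) := by
        rw [div_eq_iff d12]; linear_combination (-1 / 156 : ℂ) * ht2
      have hC : (3 / 4 : ℂ) / ((-7 + (s:ℂ)) / 6)
          = -7 / 8 - 1 / 8 * (s:ℂ) := by
        rw [div_eq_iff c1]; linear_combination (1 / 48 : ℂ) * ht2
      rw [hA, hB, hC]; ring
    · rw [Finset.sum_erase _ (by simp), Fin.sum_univ_three]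
      simp only [Fin.mk_zero, Fin.mk_one, Fin.reduceFinMk, Fin.isValue, Matrix.cons_val_zero,
        Matrix.cons_val_one, Matrix.head_cons, Matrix.cons_val_two, Matrix.tail_cons,
        sub_self, div_zero, zero_add, add_zero]
      have hA : (1 / 4 : ℂ) / (1 - -((11 + 3 * (s:ℂ)) / 2))
          = 1 / 8 - 3 / 104 * (s:ℂ) := by
        rw [div_eq_iff d20]; linear_combination (9 / 208 : ℂ) * ht2
      have hB : (3 / 4 : ℂ) / (1 - (-7 + (s:ℂ)) / 6)
          = 3 / 8 + 3 / 104 * (s:ℂ) := by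
        rw [div_eq_iff d21]; linear_combination (1 / 208 : ℂ) * ht2
      rw [hA, hB]; ring
end
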